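/- Let G = ℤ/2 × ℤ/2. There exists a short exact sequence 0 → K → N → M → 0 of ℤ[G]-modules such that for every subgroup H ≤ G the induced sequence of H-fixed points 0 → K^H → N^H → M^H → 0 is short exact, while the induced map on G-cofixed points K_G → N_G is not injective. -/

import Mathlib

open CategoryTheory

variable {G : Type} [Group G]

/-- The underlying additive monoid homomorphism of a morphism of `ℤ[G]`-modules. -/
def repHomToAdd {V W : Rep.{0} ℤ G} (f : V ⟶ W) : V →+ W :=
  AddMonoidHom.mk' f.hom (map_add f.hom)

/-- The subgroup of `H`-invariants (`H`-fixed points) of a `ℤ[G]`-module. -/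
def invSub (H : Subgroup G) (V : Rep.{0} ℤ G) : AddSubgroup V where
  carrier := {x | ∀ σ ∈ H, V.ρ σ x = x}
  zero_mem' := fun σ _ => map_zero _
  add_mem' := fun ha hb σ hσ => by rw [map_add, ha σ hσ, hb σ hσ]
  neg_mem' := fun ha σ hσ => by rw [map_neg, ha σ hσ]

/-- The subgroup generated by the elements `v - σ • v` for `σ ∈ H`. -/
noncomputable def coinvSub (H : Subgroup G) (V : Rep.{0} ℤ G) : AddSubgroup V :=
  AddSubgroup.closure {x | ∃ (v : V) (σ : G), σ ∈ H ∧ x = v - V.ρ σ v}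

/-- The `H`-fixed points functor on `ℤ[G]`-modules. -/
noncomputable def invFunctor (H : Subgroup G) : Rep.{0} ℤ G ⥤ AddCommGrpCat where
  obj V := AddCommGrpCat.of (invSub H V)
  map {V W} f := AddCommGrpCat.ofHom <| AddMonoidHom.codRestrict
    ((repHomToAdd f).domRestrict (invSub H V)) (invSub H W)
    (fun x σ hσ => by
      simp only [repHomToAdd, AddMonoidHom.restrict_apply, AddMonoidHom.mk'_apply]
      rw [← Rep.hom_comm_apply, x.2 σ hσ])
  map_id V := by ext x; rfl
  map_comp f g := by ext x; rfl

/-- The `H`-cofixed points functor on `ℤ[G]`-modules. -/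
noncomputable def coinvFunctor (H : Subgroup G) : Rep.{0} ℤ G ⥤ AddCommGrpCat where
  obj V := AddCommGrpCat.of (V ⧸ coinvSub H V)
  map {V W} f := AddCommGrpCat.ofHom <| QuotientAddGroup.map _ _ (repHomToAdd f) (by
    rw [coinvSub, AddSubgroup.closure_le]
    rintro x ⟨v, σ, hσ, rfl⟩
    simp only [SetLike.mem_coe, AddSubgroup.mem_comap, map_sub]
    refine AddSubgroup.subset_closure ⟨f.hom v, σ, hσ, ?_⟩
    simp only [repHomToAdd, AddMonoidHom.mk'_apply]
    rw [Rep.hom_comm_apply])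
  map_id V := by
    ext x
    rfl
  map_comp f g := by
    ext x
    rfl

instance (H : Subgroup G) : (invFunctor H).Additive where
  map_add {X Y f g} := by
    ext x
    rfl

instance (H : Subgroup G) : (coinvFunctor H).Additive where
  map_add {X Y f g} := by
    ext x
    refine QuotientAddGroup.induction_on x (fun v => ?_)
    show QuotientAddGroup.mk ((f + g).hom v) = _
    rw [Rep.add_hom f g]
    rfl

/-- The Klein four-group `ℤ/2 × ℤ/2`. -/
abbrev KleinFour : Type := Multiplicative (ZMod 2) × Multiplicative (ZMod 2)

/-! ### Auxiliary construction for `stmt_8` -/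

namespace Stmt8

/-- The underlying abelian group of the middle module `N`: `ℤ/8 × ℤ/2`. -/
abbrev V8 : Type := ZMod 8 × ZMod 2

/-- Reduction map `ℤ/8 → ℤ/2`. -/
def bit (x : ZMod 8) : ZMod 2 := (x.val : ZMod 2)

/-- `3 ^ h` in `ℤ/8` for `h : ℤ/2`. -/
def c3 (h : ZMod 2) : ZMod 8 := if h = 0 then 1 else 3

/-- The action of a group element on `N = ℤ/8 × ℤ/2`:
`(g, h) • (x, y) = (3^h * x, g * (x mod 2) + y)`. -/
def nAct (g : KleinFour) (v : V8) : V8 :=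
  (c3 (Multiplicative.toAdd g.2) * v.1, Multiplicative.toAdd g.1 * bit v.1 + v.2)

/-- The action of a group element on `M = ℤ/8`:
`(g, h) • m = 3^h * m + 4 * (g * (m mod 2))`. -/
def mAct (g : KleinFour) (m : ZMod 8) : ZMod 8 :=
  c3 (Multiplicative.toAdd g.2) * m + 4 * ((Multiplicative.toAdd g.1 * bit m).val : ZMod 8)

/-- The inclusion `ℤ/2 → ℤ/8 × ℤ/2`, `z ↦ (4z, z)`. -/
def iFun (z : ZMod 2) : V8 := ((z.val : ZMod 8) * 4, z)

/-- The projection `ℤ/8 × ℤ/2 → ℤ/8`, `(x, y) ↦ x + 4y`. -/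
def pFun (v : V8) : ZMod 8 := v.1 + (v.2.val : ZMod 8) * 4

lemma nAct_add : ∀ g : KleinFour, ∀ a b : V8, nAct g (a + b) = nAct g a + nAct g b := by decide
lemma nAct_one : ∀ v : V8, nAct 1 v = v := by decide
lemma nAct_mul : ∀ g h : KleinFour, ∀ v : V8, nAct (g * h) v = nAct g (nAct h v) := by decide
lemma mAct_add : ∀ g : KleinFour, ∀ a b : ZMod 8, mAct g (a + b) = mAct g a + mAct g b := by decide
lemma mAct_one : ∀ m : ZMod 8, mAct 1 m = m := by decide
lemma mAct_mul : ∀ g h : KleinFour, ∀ m : ZMod 8, mAct (g * h) m = mAct g (mAct h m) := by decide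
lemma iFun_add : ∀ a b : ZMod 2, iFun (a + b) = iFun a + iFun b := by decide
lemma pFun_add : ∀ a b : V8, pFun (a + b) = pFun a + pFun b := by decide
lemma i_comm : ∀ g : KleinFour, ∀ z : ZMod 2, nAct g (iFun z) = iFun z := by decide
lemma p_comm : ∀ g : KleinFour, ∀ v : V8, pFun (nAct g v) = mAct g (pFun v) := by decide
lemma i_inj : ∀ a b : ZMod 2, iFun a = iFun b → a = b := by decide
lemma p_surj : ∀ m : ZMod 8, ∃ v : V8, pFun v = m := by decide
lemma ip_exact : ∀ v : V8, pFun v = 0 ↔ ∃ z : ZMod 2, iFun z = v := by decide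
/-- Key rigidity: if `σ v` and `v` have the same image in `M`, then `σ v = v`. -/
lemma key : ∀ g : KleinFour, ∀ v : V8, pFun (nAct g v) = pFun v → nAct g v = v := by decide


lemma p_i_zero : ∀ z : ZMod 2, pFun (iFun z) = 0 := by decide

/-- The representation on `N`. -/
def rhoN : Representation ℤ KleinFour V8 where
  toFun g := (AddMonoidHom.mk' (nAct g) (nAct_add g ·)).toIntLinearMap
  map_one' := LinearMap.ext fun v => nAct_one v
  map_mul' g h := LinearMap.ext fun v => nAct_mul g h v

/-- The representation on `M`. -/
def rhoM : Representation ℤ KleinFour (ZMod 8) where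
  toFun g := (AddMonoidHom.mk' (mAct g) (mAct_add g ·)).toIntLinearMap
  map_one' := LinearMap.ext fun m => mAct_one m
  map_mul' g h := LinearMap.ext fun m => mAct_mul g h m

/-- `K = ℤ/2` with the trivial action. -/
noncomputable def Krep : Rep ℤ KleinFour := Rep.trivial ℤ KleinFour (ZMod 2)

/-- `N = ℤ/8 × ℤ/2`. -/
noncomputable def Nrep : Rep ℤ KleinFour := Rep.of rhoN

/-- `M = ℤ/8`. -/
noncomputable def Mrep : Rep ℤ KleinFour := Rep.of rhoM

/-- The inclusion `K ⟶ N`. -/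
noncomputable def iMor : Krep ⟶ Nrep :=
  Rep.ofHom ⟨(AddMonoidHom.mk' iFun (iFun_add · ·)).toIntLinearMap, fun g => by
    exact LinearMap.ext fun z => (i_comm g z).symm⟩

/-- The projection `N ⟶ M`. -/
noncomputable def pMor : Nrep ⟶ Mrep :=
  Rep.ofHom ⟨(AddMonoidHom.mk' pFun (pFun_add · ·)).toIntLinearMap, fun g => by
    exact LinearMap.ext fun v => (p_comm g v)⟩

lemma coe_rho_N : ∀ (σ : KleinFour) (v : V8), Nrep.ρ σ v = nAct σ v := fun _ _ => rfl

lemma mem_coinv_N :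
    (((4 : ZMod 8), (1 : ZMod 2)) : Nrep) ∈ coinvSub (⊤ : Subgroup KleinFour) Nrep := by
  have m1 : (((0 : ZMod 8), (1 : ZMod 2)) : Nrep) ∈ coinvSub (⊤ : Subgroup KleinFour) Nrep :=
    AddSubgroup.subset_closure ⟨((1 : ZMod 8), (0 : ZMod 2)),
      (Multiplicative.ofAdd (1 : ZMod 2), 1), trivial, by
        rw [coe_rho_N]; rfl⟩
  have m2 : (((4 : ZMod 8), (0 : ZMod 2)) : Nrep) ∈ coinvSub (⊤ : Subgroup KleinFour) Nrep :=
    AddSubgroup.subset_closure ⟨((2 : ZMod 8), (0 : ZMod 2)),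
      (1, Multiplicative.ofAdd (1 : ZMod 2)), trivial, by
        rw [coe_rho_N]; rfl⟩
  have e : (((4 : ZMod 8), (1 : ZMod 2)) : Nrep) =
      ((0 : ZMod 8), (1 : ZMod 2)) + ((4 : ZMod 8), (0 : ZMod 2)) := by decide
  rw [e]
  exact AddSubgroup.add_mem _ m1 m2

end Stmt8


open Stmt8

/-- For `G = ℤ/2 × ℤ/2` there exists a short exact sequence
`0 → K → N → M → 0` of `ℤ[G]`-modules such that for every subgroup `H ≤ G` the induced
sequence of `H`-fixed points `0 → K^H → N^H → M^H → 0` is short exact, while the induced map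
on `G`-cofixed points `K_G → N_G` is not injective. -/
theorem stmt_8 :
    ∃ (K N M : Rep.{0} ℤ KleinFour) (i : K ⟶ N) (p : N ⟶ M),
      Function.Injective ⇑i.hom ∧ Function.Surjective ⇑p.hom ∧
      Function.Exact ⇑i.hom ⇑p.hom ∧
      (∀ H : Subgroup KleinFour,
        Function.Injective ⇑((invFunctor H).map i) ∧
        Function.Exact ⇑((invFunctor H).map i) ⇑((invFunctor H).map p) ∧
        Function.Surjective ⇑((invFunctor H).map p)) ∧
      ¬ Function.Injective ⇑((coinvFunctor (⊤ : Subgroup KleinFour)).map i) := by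
  refine ⟨Krep, Nrep, Mrep, iMor, pMor, ?_, ?_, ?_, ?_, ?_⟩
  · -- injectivity of i
    intro a b h
    exact i_inj a b h
  · -- surjectivity of p
    intro m
    exact p_surj m
  · -- exactness
    intro v
    exact ip_exact v
  · -- fixed points for every H
    intro H
    refine ⟨?_, ?_, ?_⟩
    · -- injectivity on H-fixed points
      intro x y h
      exact Subtype.ext (i_inj x.1 y.1 (congrArg Subtype.val h))
    · -- exactness on H-fixed points
      intro y
      constructor
      · intro h
        have h0 : pFun y.1 = 0 := congrArg Subtype.val h
        obtain ⟨z, hz⟩ := (ip_exact y.1).1 h0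
        exact ⟨⟨z, fun σ _ => rfl⟩, Subtype.ext hz⟩
      · rintro ⟨⟨z, hzfix⟩, hz⟩
        have hz' : iFun z = y.1 := congrArg Subtype.val hz
        refine Subtype.ext ?_
        show pFun y.1 = 0
        rw [← hz']
        exact p_i_zero z
    · -- surjectivity on H-fixed points
      rintro ⟨m, hm⟩
      obtain ⟨v, hv⟩ := p_surj m
      refine ⟨⟨v, fun σ hσ => key σ v ?_⟩, Subtype.ext hv⟩
      have : mAct σ m = m := hm σ hσ
      rw [p_comm σ v, hv]; exact this
  · -- coinvariants: not injective
    intro hinj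
    have im1 : ((coinvFunctor (⊤ : Subgroup KleinFour)).map iMor)
        (QuotientAddGroup.mk (1 : ZMod 2)) = 0 := by
      show (QuotientAddGroup.mk (iFun 1) : Nrep ⧸ coinvSub ⊤ Nrep) = 0
      exact (QuotientAddGroup.eq_zero_iff _).2 mem_coinv_N
    have im0 : ((coinvFunctor (⊤ : Subgroup KleinFour)).map iMor)
        (QuotientAddGroup.mk (0 : ZMod 2)) = 0 := by
      show (QuotientAddGroup.mk (iFun 0) : Nrep ⧸ coinvSub ⊤ Nrep) = 0
      exact (QuotientAddGroup.eq_zero_iff _).2 (by exact (coinvSub ⊤ Nrep).zero_mem)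
    have h10 : (QuotientAddGroup.mk (1 : ZMod 2) : Krep ⧸ coinvSub ⊤ Krep) =
        QuotientAddGroup.mk (0 : ZMod 2) := hinj (im1.trans im0.symm)
    have hK : (1 : ZMod 2) ∈ coinvSub (⊤ : Subgroup KleinFour) Krep :=
      by haveI : (coinvSub (⊤ : Subgroup KleinFour) Krep).Normal :=
           ⟨fun n hn g => by convert hn using 1; abel⟩
         exact (@QuotientAddGroup.eq_zero_iff Krep _ (coinvSub ⊤ Krep) this (1 : ZMod 2)).1 h10
    have hbot : coinvSub (⊤ : Subgroup KleinFour) Krep ≤ ⊥ := by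
      rw [coinvSub, AddSubgroup.closure_le]
      rintro x ⟨v, σ, _, rfl⟩
      have ht : Krep.ρ σ v = v := rfl
      simp [ht]
    have hcon : (1 : ZMod 2) = 0 := AddSubgroup.mem_bot.1 (hbot hK)
    exact absurd hcon (by decide)
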